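/- (p lies on the first screw axis) Let Ξ = S(R,p)U be the SU-decomposition of a regular Ξ with first column screw (α, β), α ≠ 0. Then p satisfies p = (α × β)/‖α‖² + t · α/‖α‖ for some t ∈ ℝ; i.e., p lies on the line {(α × β)/‖α‖² + t · α/‖α‖ : t ∈ ℝ}, the screw axis of (α, β). -/

import Mathlib

open Matrix

/-- Cross product in ℝ³. -/
def cross3 (a b : Fin 3 → ℝ) : Fin 3 → ℝ :=
  ![a 1 * b 2 - a 2 * b 1, a 2 * b 0 - a 0 * b 2, a 0 * b 1 - a 1 * b 0]

/-- Euclidean norm in ℝ³. -/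
noncomputable def enorm3 (v : Fin 3 → ℝ) : ℝ := Real.sqrt (∑ i, v i ^ 2)

/-- Dot product in ℝ³. -/
def dot3 (a b : Fin 3 → ℝ) : ℝ := ∑ i, a i * b i

/-- Membership in SO(3). -/
def SO3 (R : Matrix (Fin 3) (Fin 3) ℝ) : Prop := Rᵀ * R = 1 ∧ R.det = 1

/-- Skew-symmetric cross-product matrix [p]×. -/
def skew3 (p : Fin 3 → ℝ) : Matrix (Fin 3) (Fin 3) ℝ :=
  !![0, -p 2, p 1; p 2, 0, -p 0; -p 1, p 0, 0]

/-- The 6×6 screw-transformation matrix S(R,p) = [[R,0],[[p]×R,R]]. -/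
def Scr (R : Matrix (Fin 3) (Fin 3) ℝ) (p : Fin 3 → ℝ) :
    Matrix (Fin 3 ⊕ Fin 3) (Fin 3 ⊕ Fin 3) ℝ :=
  Matrix.fromBlocks R 0 (skew3 p * R) R

/-- Upper-triangular 3×3 matrix. -/
def UT3 (M : Matrix (Fin 3) (Fin 3) ℝ) : Prop :=
  ∀ i j : Fin 3, (j : ℕ) < (i : ℕ) → M i j = 0

/-!
Since `U₁` and `U₂` are upper triangular, the first columns `a` of `A = R U₁` and of `R U₂` are
both multiples of the first column `r` of `R`, so the first column of `B` is `b = p × a + c r`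
with `a × r = 0`. Hence `a × b = a × (p × a) = ‖a‖² p - (a ⬝ p) a`, which places `p` on the screw axis
with parameter `t = (a ⬝ p) / ‖a‖`.
-/

theorem cross3_eq_crossProduct (a b : Fin 3 → ℝ) : cross3 a b = a ⨯₃ b := rfl

theorem enorm3_sq (v : Fin 3 → ℝ) : enorm3 v ^ 2 = v ⬝ᵥ v :=
  Real.sq_sqrt (Finset.sum_nonneg fun i _ => sq_nonneg (v i)) |>.trans
    (Finset.sum_congr rfl fun i _ => sq (v i))

theorem skew3_mulVec (p v : Fin 3 → ℝ) : skew3 p *ᵥ v = p ⨯₃ v := by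
  ext i
  fin_cases i <;> simp [skew3, cross_apply, mulVec, dotProduct, Fin.sum_univ_three] <;> ring

theorem mul_col_eq_mulVec {m n o α : Type*} [Fintype n] [NonUnitalNonAssocSemiring α]
    (M : Matrix m n α) (N : Matrix n o α) (j : o) : (fun i => (M * N) i j) = M *ᵥ fun k => N k j := rfl

theorem UT3.mul_col_zero {U : Matrix (Fin 3) (Fin 3) ℝ} (hU : UT3 U) (M : Matrix (Fin 3) (Fin 3) ℝ) :
    (fun i => (M * U) i 0) = U 0 0 • fun i => M i 0 := by
  ext i
  simp [mul_apply, Fin.sum_univ_three, hU 1 0 (by decide), hU 2 0 (by decide), mul_comm]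

theorem eq_inv_smul_cross_add_smul {K : Type*} [Field K] {a b p : Fin 3 → K}
    (ha : a ⬝ᵥ a ≠ 0) (h : a ⨯₃ (b - p ⨯₃ a) = 0) :
    p = (a ⬝ᵥ a)⁻¹ • a ⨯₃ b + ((a ⬝ᵥ p) / (a ⬝ᵥ a)) • a := by
  have hab : a ⨯₃ b = (a ⬝ᵥ a) • p - (p ⬝ᵥ a) • a := by
    rw [map_sub, sub_eq_zero] at h
    rw [h, cross_cross_eq_smul_sub_smul']
  rw [hab, smul_sub, smul_smul, inv_mul_cancel₀ ha, one_smul, smul_smul, dotProduct_comm p,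
    div_eq_inv_mul, sub_add_cancel]

theorem stmt12_general (A B R U₁ U₂ : Matrix (Fin 3) (Fin 3) ℝ) (p : Fin 3 → ℝ)
    (hreg1 : (fun i => A i 0) ≠ 0)
    (hU₁ : UT3 U₁) (hU₂ : UT3 U₂)
    (hA : A = R * U₁) (hB : B = skew3 p * R * U₁ + R * U₂) :
    ∃ t : ℝ,
      p = (enorm3 (fun i => A i 0) ^ 2)⁻¹ •
            cross3 (fun i => A i 0) (fun i => B i 0) +
          t • ((enorm3 (fun i => A i 0))⁻¹ • (fun i => A i 0)) := by
  set a : Fin 3 → ℝ := fun i => A i 0 with ha_def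
  set r : Fin 3 → ℝ := fun i => R i 0
  have ha : a = U₁ 0 0 • r := by rw [ha_def, hA]; exact hU₁.mul_col_zero R
  have hb : (fun i => B i 0) = p ⨯₃ a + U₂ 0 0 • r := by
    rw [← skew3_mulVec, ← hU₂.mul_col_zero, ha_def, ← mul_col_eq_mulVec, hB, Matrix.mul_assoc,
      ← hA]
    rfl
  have hpar : a ⨯₃ ((fun i => B i 0) - p ⨯₃ a) = 0 := by
    simp only [hb, add_sub_cancel_left, ha, map_smul, LinearMap.smul_apply, cross_self, smul_zero]
  have hdot : a ⬝ᵥ a ≠ 0 := mt dotProduct_self_eq_zero.mp hreg1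
  have hnorm : enorm3 a ≠ 0 := fun h => hdot (by rw [← enorm3_sq, h, sq, zero_mul])
  refine ⟨(a ⬝ᵥ p) / enorm3 a, ?_⟩
  rw [cross3_eq_crossProduct, enorm3_sq, smul_smul]
  convert eq_inv_smul_cross_add_smul hdot hpar using 3
  rw [← enorm3_sq]
  field_simp

theorem stmt12 (A B R U₁ U₂ : Matrix (Fin 3) (Fin 3) ℝ) (p : Fin 3 → ℝ)
    (hreg1 : (fun i => A i 0) ≠ 0)
    (hreg2 : cross3 (fun i => A i 0) (fun i => A i 1) ≠ 0)
    (hR : SO3 R) (hU₁ : UT3 U₁) (hU₂ : UT3 U₂)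
    (hpos1 : 0 < U₁ 0 0) (hpos2 : 0 < U₁ 1 1)
    (hA : A = R * U₁) (hB : B = skew3 p * R * U₁ + R * U₂) :
    ∃ t : ℝ,
      p = (enorm3 (fun i => A i 0) ^ 2)⁻¹ •
            cross3 (fun i => A i 0) (fun i => B i 0) +
          t • ((enorm3 (fun i => A i 0))⁻¹ • (fun i => A i 0)) :=
  stmt12_general A B R U₁ U₂ p hreg1 hU₁ hU₂ hA hB
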